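/- Let {a_n} be a sequence of real numbers such that a_{n+1} − a_n → 0 as n → ∞ but {a_n} does not have a limit. Then for any natural number r and any real number q ∈ [liminf_{n→∞} a_n, limsup_{n→∞} a_n] there exists a strictly increasing sequence n_k ↗ ∞ such that lim_{k→∞} a_{n_k} = q and a_{n_k} < a_{n_k + r} for every k. -/

import Mathlib

open Filter Set Metric MeasureTheory Topology
open scoped ENNReal NNReal

noncomputable section

/-! ### The Riemann sphere with the chordal (spherical) metric -/

/-- The Riemann sphere `ℂ ∪ {∞}`. -/
structure RSphere : Type where
  val : Option ℂ

namespace RSphere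

/-- The inclusion of `ℂ` into the Riemann sphere. -/
def ofC (z : ℂ) : RSphere := ⟨some z⟩

/-- The point at infinity. -/
def infty : RSphere := ⟨none⟩

/-- Case elimination on a point of the Riemann sphere. -/
def elim {α : Sort*} (x : RSphere) (i : α) (h : ℂ → α) : α := Option.elim x.val i h

/-- Stereographic embedding of the Riemann sphere onto the round unit sphere in
`ℝ³ = ℂ ×₂ ℝ`.  It induces the chordal (spherical) metric on `RSphere`. -/
def embed (x : RSphere) : WithLp 2 (ℂ × ℝ) :=
  elim x ((WithLp.equiv 2 (ℂ × ℝ)).symm (0, 1))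
    fun z => (WithLp.equiv 2 (ℂ × ℝ)).symm
      (((2 / (‖z‖ ^ 2 + 1)) : ℝ) • z, (‖z‖ ^ 2 - 1) / (‖z‖ ^ 2 + 1))

/-- Inverse of the stereographic embedding. -/
def unembed (v : WithLp 2 (ℂ × ℝ)) : RSphere :=
  if (WithLp.equiv 2 (ℂ × ℝ) v).2 = 1 then infty
  else ofC ((1 - (WithLp.equiv 2 (ℂ × ℝ) v).2)⁻¹ • (WithLp.equiv 2 (ℂ × ℝ) v).1)

lemma leftInverse_unembed : Function.LeftInverse unembed embed := by
  rintro ⟨x⟩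
  cases x with
  | none =>
      simp [embed, unembed, elim, infty]
  | some z =>
      have h1 : (0 : ℝ) < ‖z‖ ^ 2 + 1 := by positivity
      have ht : (‖z‖ ^ 2 - 1) / (‖z‖ ^ 2 + 1) ≠ 1 := by
        intro h
        rw [div_eq_one_iff_eq h1.ne'] at h
        linarith
      simp only [embed, unembed, elim, Option.elim, Equiv.apply_symm_apply, ht, if_false, ofC]
      congr 2
      rw [smul_smul]
      have h2 : 1 - (‖z‖ ^ 2 - 1) / (‖z‖ ^ 2 + 1) = 2 / (‖z‖ ^ 2 + 1) := by
        field_simp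
        ring
      rw [h2]
      rw [inv_mul_cancel₀ (by positivity), one_smul]

lemma embed_injective : Function.Injective embed := leftInverse_unembed.injective

/-- The chordal metric on the Riemann sphere, induced by the stereographic embedding
onto the round unit sphere in Euclidean 3-space. -/
instance : MetricSpace RSphere := MetricSpace.induced embed embed_injective inferInstance

instance : MeasurableSpace RSphere := borel RSphere

instance : BorelSpace RSphere := ⟨rfl⟩

/-- Reading off a finite point (junk value `0` at `∞`). -/
def toC (x : RSphere) : ℂ := elim x 0 id

/-- The involution `z ↦ 1/z` of the Riemann sphere. -/
def inv (x : RSphere) : RSphere :=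
  elim x (ofC 0) fun z => if z = 0 then infty else ofC z⁻¹

end RSphere

/-! ### Basic dynamical notions -/

/-- The norm of the derivative of `g` at `x`, measured in the spherical metric
(for a rational map this is the usual norm of the spherical derivative). -/
def sphDeriv (g : RSphere → RSphere) (x : RSphere) : ℝ :=
  limsup (fun y => dist (g y) (g x) / dist y x) (𝓝[≠] x)

/-- The set of critical points. -/
def critSet (g : RSphere → RSphere) : Set RSphere := {x | sphDeriv g x = 0}

/-- The Fatou set: points having a neighbourhood on which the family of iterates is
equicontinuous (i.e. normal). -/
def fatouSet (f : RSphere → RSphere) : Set RSphere :=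
  {x | ∃ U : Set RSphere, IsOpen U ∧ x ∈ U ∧ EquicontinuousOn (fun n : ℕ => f^[n]) U}

/-- The Julia set. -/
def juliaSet (f : RSphere → RSphere) : Set RSphere := (fatouSet f)ᶜ

/-- `f` is the rational map on the Riemann sphere given by the coprime pair of
polynomials `p`, `q`. -/
structure IsRationalMap (f : RSphere → RSphere) (p q : Polynomial ℂ) : Prop where
  coprime : IsCoprime p q
  continuous : Continuous f
  eval : ∀ z : ℂ, q.eval z ≠ 0 → f (RSphere.ofC z) = RSphere.ofC (p.eval z / q.eval z)

/-- The degree of the rational map `p/q`. -/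
def ratDeg (p q : Polynomial ℂ) : ℕ := max p.natDegree q.natDegree

/-- The lower Lyapunov exponent `χ̲(x) = liminf (1/n) log |(fⁿ)'(x)|`, as an extended real. -/
def lyapLower (f : RSphere → RSphere) (x : RSphere) : EReal :=
  liminf (fun n : ℕ => ((Real.log (sphDeriv (f^[n]) x) / n : ℝ) : EReal)) atTop

/-- The upper Lyapunov exponent `χ̄(x) = limsup (1/n) log |(fⁿ)'(x)|`, as an extended real. -/
def lyapUpper (f : RSphere → RSphere) (x : RSphere) : EReal :=
  limsup (fun n : ℕ => ((Real.log (sphDeriv (f^[n]) x) / n : ℝ) : EReal)) atTop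

/-- The level set `𝓛(a,b)` of points of the Julia set with lower exponent `a` and
upper exponent `b`. -/
def levelSet (f : RSphere → RSphere) (a b : EReal) : Set RSphere :=
  {x | x ∈ juliaSet f ∧ lyapLower f x = a ∧ lyapUpper f x = b}

/-- The set `𝓛̂(α,β)` of points of the Julia set with `χ̲ ≤ β`, `χ̄ ≥ α` and `χ̄ > 0`. -/
def levelHat (f : RSphere → RSphere) (α β : ℝ) : Set RSphere :=
  {x | x ∈ juliaSet f ∧ lyapLower f x ≤ (β : EReal) ∧ (α : EReal) ≤ lyapUpper f x ∧
    0 < lyapUpper f x}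

/-- Birkhoff sum `S_m φ = φ + φ∘g + ⋯ + φ∘g^{m-1}`. -/
def birkhoff (g : RSphere → RSphere) (φ : RSphere → ℝ) (m : ℕ) (x : RSphere) : ℝ :=
  ∑ k ∈ Finset.range m, φ (g^[k] x)

/-- An `(m,ε)`-separated finite subset of `Λ` for the map `g`. -/
def IsSepSet (g : RSphere → RSphere) (Λ : Set RSphere) (m : ℕ) (ε : ℝ)
    (E : Finset RSphere) : Prop :=
  ↑E ⊆ Λ ∧ ∀ x ∈ E, ∀ y ∈ E, x ≠ y → ∃ k < m, ε ≤ dist (g^[k] x) (g^[k] y)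

/-- Topological pressure of the potential `φ` for `g` restricted to `Λ`,
defined à la Bowen via `(m,ε)`-separated sets. -/
def pressureOn (g : RSphere → RSphere) (Λ : Set RSphere) (φ : RSphere → ℝ) : ℝ :=
  ⨆ ε : {ε : ℝ // 0 < ε}, limsup (fun m : ℕ =>
    Real.log (⨆ E : {E : Finset RSphere // IsSepSet g Λ m ε.1 E},
      ∑ x ∈ E.1, Real.exp (birkhoff g φ m x)) / m) atTop

/-- `g` is uniformly expanding on `Λ`: `|(gᵐ)'(x)| ≥ c λᵐ` for some `c > 0`, `λ > 1`. -/
def ExpandingOn (g : RSphere → RSphere) (Λ : Set RSphere) : Prop :=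
  ∃ c > (0 : ℝ), ∃ l : ℝ, 1 < l ∧ ∀ x ∈ Λ, ∀ m : ℕ, 1 ≤ m → c * l ^ m ≤ sphDeriv (g^[m]) x

/-- `Λ` is a repeller for `g`: a compact invariant isolated set. -/
def IsRepeller (g : RSphere → RSphere) (Λ : Set RSphere) : Prop :=
  IsCompact Λ ∧ g '' Λ = Λ ∧
    ∃ U : Set RSphere, IsOpen U ∧ Λ ⊆ U ∧ ∀ x, (∀ m : ℕ, g^[m] x ∈ U) → x ∈ Λ

/-- Topological transitivity of `g` on `Λ`. -/
def TopTransOn (g : RSphere → RSphere) (Λ : Set RSphere) : Prop :=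
  ∀ U V : Set RSphere, IsOpen U → IsOpen V → (U ∩ Λ).Nonempty → (V ∩ Λ).Nonempty →
    ∃ m : ℕ, (g^[m] '' (U ∩ Λ) ∩ V).Nonempty

/-- The topological pressure of `φ` with respect to `f` on its Julia set, given by
the supremum of the pressures on compact invariant uniformly expanding subsets of `J`. -/
def pressureTop (f : RSphere → RSphere) (φ : RSphere → ℝ) : ℝ :=
  ⨆ L : {L : Set RSphere //
      L.Nonempty ∧ L ⊆ juliaSet f ∧ IsCompact L ∧ f '' L = L ∧ ExpandingOn f L},
    pressureOn f L.1 φ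

/-- The pressure function `d ↦ P(φ_d)` where `φ_d = -d log|f'|`. -/
def pressFamily (f : RSphere → RSphere) (d : ℝ) : ℝ :=
  pressureTop f fun x => -d * Real.log (sphDeriv f x)

/-- `F(α) = α⁻¹ inf_d (Q(d) + dα)` associated with a pressure function `Q` (for `α ≠ 0`). -/
def specF (Q : ℝ → ℝ) (α : ℝ) : EReal :=
  ((α⁻¹ : ℝ) : EReal) * ⨅ d : ℝ, ((Q d + d * α : ℝ) : EReal)

/-- `F(0) = lim_{α → 0⁺} F(α)`. -/
def specF0 (Q : ℝ → ℝ) : EReal := limsup (fun α : ℝ => specF Q α) (𝓝[>] (0 : ℝ))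

/-- The full spectrum function `F` associated with a pressure function `Q`. -/
def specFext (Q : ℝ → ℝ) (α : ℝ) : EReal := if α = 0 then specF0 Q else specF Q α

/-- The Lyapunov spectrum function `F` of `f`. -/
def Ffun (f : RSphere → RSphere) (α : ℝ) : EReal := specFext (pressFamily f) α

/-- `α⁻ = lim_{d → +∞} -Q(d)/d` for a pressure function `Q`. -/
def alphaMinusOf (Q : ℝ → ℝ) : ℝ := limsup (fun d : ℝ => -Q d / d) atTop

/-- `α⁺ = lim_{d → -∞} -Q(d)/d` for a pressure function `Q`. -/
def alphaPlusOf (Q : ℝ → ℝ) : ℝ := limsup (fun d : ℝ => -Q d / d) atBot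

/-- `α⁻` for the map `f`. -/
def alphaMinus (f : RSphere → RSphere) : ℝ := alphaMinusOf (pressFamily f)

/-- `α⁺` for the map `f`. -/
def alphaPlus (f : RSphere → RSphere) : ℝ := alphaPlusOf (pressFamily f)

/-- The Lyapunov exponent `χ(μ) = ∫ log|g'| dμ` of a measure. -/
def lyapMeas (g : RSphere → RSphere) (μ : Measure RSphere) : ℝ :=
  ∫ x, Real.log (sphDeriv g x) ∂μ

/-- `α⁻` as the infimum of Lyapunov exponents of invariant probability measures on `J`. -/
def alphaMinusMeas (f : RSphere → RSphere) : ℝ :=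
  sInf {r : ℝ | ∃ μ : Measure RSphere, IsProbabilityMeasure μ ∧ MeasurePreserving f μ μ ∧
    μ (juliaSet f)ᶜ = 0 ∧ r = lyapMeas f μ}

/-- `α⁺` as the supremum of Lyapunov exponents of invariant probability measures on `J`. -/
def alphaPlusMeas (f : RSphere → RSphere) : ℝ :=
  sSup {r : ℝ | ∃ μ : Measure RSphere, IsProbabilityMeasure μ ∧ MeasurePreserving f μ μ ∧
    μ (juliaSet f)ᶜ = 0 ∧ r = lyapMeas f μ}

/-- The maximal distortion `sup_{x,y ∈ Z} |g'(x)|/|g'(y)|` of `g` on `Z`. -/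
def distortionOn (g : RSphere → RSphere) (Z : Set RSphere) : ℝ :=
  sSup {r : ℝ | ∃ x ∈ Z, ∃ y ∈ Z, r = sphDeriv g x / sphDeriv g y}

/-- Conical points. -/
def IsConical (f : RSphere → RSphere) (x : RSphere) : Prop :=
  ∃ r : ℝ, 0 < r ∧ ∃ K : ℝ, ∃ n : ℕ → ℕ, StrictMono n ∧ ∃ U : ℕ → Set RSphere,
    ∀ i, U i ∈ 𝓝 x ∧ ball (f^[n i] x) r ⊆ f^[n i] '' U i ∧ distortionOn (f^[n i]) (U i) ≤ K

/-- A non-immediately postcritical point: there is a backward orbit through it that is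
dense in the Julia set and avoids the critical points. -/
def NonImmPostCrit (f : RSphere → RSphere) (x : RSphere) : Prop :=
  ∃ b : ℕ → RSphere, b 0 = x ∧ (∀ n, f (b (n + 1)) = b n) ∧
    juliaSet f ⊆ closure (Set.range b) ∧ ∀ n, b n ∉ critSet f

/-- `f` is exceptional: there is a finite nonempty set `Σ_f` with `f⁻¹(Σ_f) \ Crit = Σ_f`. -/
def IsExceptional (f : RSphere → RSphere) : Prop :=
  ∃ S : Set RSphere, S.Finite ∧ S.Nonempty ∧ f ⁻¹' S \ critSet f = S

/-- The largest exceptional set `Σ` of `f`. -/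
def maxExceptional (f : RSphere → RSphere) : Set RSphere :=
  ⋃₀ {S : Set RSphere | S.Finite ∧ S.Nonempty ∧ f ⁻¹' S \ critSet f = S}

/-- `0` not being exceptional, or having exceptional set away from the Julia set. -/
def GoodExc (f : RSphere → RSphere) : Prop :=
  ¬ IsExceptional f ∨ maxExceptional f ∩ juliaSet f = ∅

/-- A parabolic periodic point at a finite point `z`: a periodic point whose multiplier
is a root of unity. -/
def IsParabolicFix (g : RSphere → RSphere) (z : ℂ) : Prop :=
  ∃ m : ℕ, 0 < m ∧ g^[m] (RSphere.ofC z) = RSphere.ofC z ∧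
    ∃ lam : ℂ, (∃ k : ℕ, 0 < k ∧ lam ^ k = 1) ∧
      HasDerivAt (fun w => RSphere.toC (g^[m] (RSphere.ofC w))) lam z

/-- A parabolic periodic point of `f` (at a finite point, or at `∞` read in the chart `1/z`). -/
def IsParabolic (f : RSphere → RSphere) (x : RSphere) : Prop :=
  (∃ z : ℂ, x = RSphere.ofC z ∧ IsParabolicFix f z) ∨
  (x = RSphere.infty ∧ IsParabolicFix (fun y => RSphere.inv (f (RSphere.inv y))) 0)

/-- A recurrent point. -/
def IsRecurrentPt (f : RSphere → RSphere) (x : RSphere) : Prop :=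
  ∃ n : ℕ → ℕ, StrictMono n ∧ Tendsto (fun i => f^[n i] x) atTop (𝓝 x)

/-! ### Graph directed systems and expanding Cantor repellers -/

/-- A graph directed system (GDS) satisfying the strong separation condition with
respect to the map `g`. -/
structure GDS (g : RSphere → RSphere) where
  /-- number of vertices -/
  n : ℕ
  npos : 0 < n
  /-- the open domains -/
  U : Fin n → Set RSphere
  /-- the admissible edges -/
  edge : Fin n → Fin n → Prop
  /-- the inverse branches -/
  br : Fin n → Fin n → RSphere → RSphere
  isOpen : ∀ k, IsOpen (U k)
  isConnected : ∀ k, IsConnected (U k)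
  disjClosure : ∀ k l, k ≠ l → closure (U k) ∩ closure (U l) = ∅
  mapsTo : ∀ k l, edge k l → Set.MapsTo (br k l) (closure (U l)) (U k)
  isBranch : ∀ k l, edge k l → ∀ x ∈ closure (U l), g (br k l x) = x
  bddDistortion : ∃ C : ℝ, ∀ k l, edge k l → distortionOn (br k l) (closure (U l)) ≤ C

/-- The cylinder sets of depth `m` of a GDS. -/
def gdsCyl {g : RSphere → RSphere} (G : GDS g) : ℕ → Set RSphere
  | 0 => ⋃ k, G.U k
  | m + 1 => ⋃ (k : Fin G.n) (l : Fin G.n) (_ : G.edge k l),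
      G.br k l '' (gdsCyl G m ∩ G.U l)

/-- The limit set of a GDS. -/
def gdsLimit {g : RSphere → RSphere} (G : GDS g) : Set RSphere := ⋂ m, gdsCyl G m

/-- An expanding Cantor repeller (ECR) for `g`: a uniformly expanding repeller which is
the limit set of a GDS satisfying the strong separation condition, with `g(Λ) = Λ`. -/
def IsECR (g : RSphere → RSphere) (Λ : Set RSphere) : Prop :=
  ExpandingOn g Λ ∧ IsRepeller g Λ ∧ ∃ G : GDS g, gdsLimit G = Λ

/-- A Cantor set: compact, perfect and totally disconnected. -/
def IsCantorSet (s : Set RSphere) : Prop :=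
  IsCompact s ∧ Perfect s ∧ IsTotallyDisconnected s

/-! ### Entropy, equilibrium states and dimensions -/

/-- The entropy of a countable partition (given by the fibers of `p`). -/
def partEntropy {ι : Type} [Countable ι] (μ : Measure RSphere) (p : RSphere → ι) : ℝ :=
  ∑' i : ι, Real.negMulLog (μ (p ⁻¹' {i})).toReal

/-- Measure-theoretic (Kolmogorov–Sinai) entropy of `T` with respect to `μ`:
supremum over finite measurable partitions of the exponential growth rate of the
entropies of the dynamical refinements. -/
def entropyOf (T : RSphere → RSphere) (μ : Measure RSphere) : ℝ :=
  ⨆ p : {p : RSphere → ℕ // Measurable p ∧ (Set.range p).Finite},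
    ⨅ n : {n : ℕ // 0 < n},
      partEntropy μ (fun x => fun k : Fin n.1 => p.1 (T^[(k : ℕ)] x)) / (n.1 : ℝ)

/-- An equilibrium state for the potential `φ` with respect to `g` restricted to `Λ`. -/
def IsEquilibrium (g : RSphere → RSphere) (Λ : Set RSphere) (φ : RSphere → ℝ)
    (μ : Measure RSphere) : Prop :=
  IsProbabilityMeasure μ ∧ μ Λᶜ = 0 ∧ MeasurePreserving g μ μ ∧
    entropyOf g μ + ∫ x, φ x ∂μ = pressureOn g Λ φ

/-- The Hausdorff dimension of a measure: the infimum of the Hausdorff dimensions of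
sets of full measure. -/
def dimHMeasure (μ : Measure RSphere) : ℝ≥0∞ :=
  ⨅ (s : Set RSphere) (_ : μ sᶜ = 0), dimH s

/-- The minimal number of `ε`-balls needed to cover `s`. -/
def coverNum (s : Set RSphere) (ε : ℝ) : ℕ :=
  sInf {n : ℕ | ∃ t : Finset RSphere, t.card = n ∧ s ⊆ ⋃ x ∈ t, ball x ε}

/-- The upper box-counting dimension. -/
def upperBoxDim (s : Set RSphere) : ℝ :=
  limsup (fun n : ℕ => Real.log (coverNum s (1 / n)) / Real.log n) atTop

/-- The packing dimension, via countable covers and upper box dimensions. -/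
def dimP (s : Set RSphere) : ℝ≥0∞ :=
  ⨅ c : {c : ℕ → Set RSphere // s ⊆ ⋃ n, c n},
    ⨆ n : ℕ, ENNReal.ofReal (upperBoxDim (c.1 n))

/-- The connected component of `y` in `g⁻¹(B)`: the pull-back of `B` along the inverse
branch of `g` sending (the image of) `y` to `y`. -/
def invBranchSet (g : RSphere → RSphere) (B : Set RSphere) (y : RSphere) : Set RSphere :=
  connectedComponentIn (g ⁻¹' B) y

end

/- Pick levels `u < v` strictly between `liminf a` and `limsup a`, with `u` close to `q`.
The sequence drops below `u` infinitely often and later climbs above `v`; since its increments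
tend to `0`, at the last visit `n` below `u` before such a climb we have `a n ≈ u`, while
`a (n + r) ≥ u` because the climb cannot be undone within `r` steps. -/

section VanishingIncrements

variable {a : ℕ → ℝ}

theorem tendsto_sub_add_of_tendsto_sub_succ
    (hdiff : Tendsto (fun n => a (n + 1) - a n) atTop (𝓝 0)) (i : ℕ) :
    Tendsto (fun n => a (n + i) - a n) atTop (𝓝 0) := by
  induction i with
  | zero => simp
  | succ i ih =>
    have hstep : Tendsto (fun n => a (n + i + 1) - a (n + i)) atTop (𝓝 0) :=
      hdiff.comp (tendsto_add_atTop_nat i)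
    simpa [← add_assoc] using hstep.add ih

theorem eventually_forall_mem_range_sub_lt
    (hdiff : Tendsto (fun n => a (n + 1) - a n) atTop (𝓝 0)) (r : ℕ) {δ : ℝ} (hδ : 0 < δ) :
    ∀ᶠ m in atTop, ∀ i ∈ Finset.range (r + 1), a m - δ < a (m + i) := by
  refine (eventually_all_finset _).2 fun i _ => ?_
  filter_upwards [(tendsto_sub_add_of_tendsto_sub_succ hdiff i).eventually
    (Ioi_mem_nhds (neg_lt_zero.2 hδ))] with m hm
  linarith [show -δ < a (m + i) - a m from hm]

theorem frequently_mem_Ioo_and_lt_add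
    (hdiff : Tendsto (fun n => a (n + 1) - a n) atTop (𝓝 0)) {r : ℕ} (hr : 0 < r)
    {u v : ℝ} (huv : u < v) (hu : ∃ᶠ n in atTop, a n < u) (hv : ∃ᶠ n in atTop, v < a n)
    {η : ℝ} (hη : 0 < η) :
    ∃ᶠ n in atTop, a n ∈ Ioo (u - η) u ∧ a n < a (n + r) := by
  classical
  obtain ⟨N₁, hstep⟩ := eventually_atTop.1
    ((hdiff.eventually (Iio_mem_nhds hη)).and (eventually_forall_mem_range_sub_lt hdiff r
      (sub_pos.2 huv)))
  refine frequently_atTop.2 fun N => ?_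
  obtain ⟨m₁, hm₁N, hm₁⟩ := frequently_atTop.1 hu (max N N₁)
  obtain ⟨m₂, hm₂m₁, hm₂⟩ := frequently_atTop.1 hv m₁
  have hclimb : ∀ j, m₂ ≤ j → j ≤ m₂ + r → u ≤ a j := fun j hj₁ hj₂ => by
    obtain ⟨i, rfl⟩ := Nat.exists_eq_add_of_le hj₁
    linarith [(hstep m₂ (by omega)).2 i (Finset.mem_range.2 (by omega))]
  set n := Nat.findGreatest (fun j => a j < u) (m₂ + r)
  have hm₁n : m₁ ≤ n := Nat.le_findGreatest (by omega) hm₁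
  have hn : a n < u := Nat.findGreatest_spec (P := fun j => a j < u) (by omega) hm₁
  have hnm₂ : n < m₂ := by
    by_contra! h
    exact (hclimb n h (Nat.findGreatest_le _)).not_gt hn
  have hafter : ∀ j, n < j → j ≤ m₂ + r → u ≤ a j := fun j hj₁ hj₂ =>
    not_lt.1 (Nat.findGreatest_is_greatest hj₁ hj₂)
  have hincr : a (n + 1) - a n < η := (hstep n (by omega)).1
  refine ⟨n, by omega, ⟨?_, hn⟩, hn.trans_le (hafter _ (by omega) (by omega))⟩
  linarith [hafter (n + 1) (by omega) (by omega)]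

end VanishingIncrements

theorem EReal.exists_coe_mem_Ioo_dist_lt {L U : EReal} (hLU : L < U) {q : ℝ}
    (hq : (q : EReal) ∈ Icc L U) {ε : ℝ} (hε : 0 < ε) :
    ∃ u : ℝ, (u : EReal) ∈ Ioo L U ∧ dist u q < ε := by
  rw [← closure_Ioo hLU.ne] at hq
  obtain ⟨_, ⟨u, hu, rfl⟩, huLU⟩ := mem_closure_iff_nhds.1 hq _
    (EReal.isOpenEmbedding_coe.isOpenMap.image_mem_nhds (ball_mem_nhds q hε))
  exact ⟨u, huLU, hu⟩

theorem liminf_lt_limsup_of_not_tendsto {a : ℕ → ℝ} {q : ℝ}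
    (hq1 : liminf (fun n => (a n : EReal)) atTop ≤ q)
    (hq2 : (q : EReal) ≤ limsup (fun n => (a n : EReal)) atTop)
    (hnot : ¬ Tendsto a atTop (𝓝 q)) :
    liminf (fun n => (a n : EReal)) atTop < limsup (fun n => (a n : EReal)) atTop := by
  by_contra! h
  exact hnot (EReal.tendsto_coe.1 (tendsto_of_liminf_eq_limsup
    (le_antisymm hq1 (hq2.trans h)) (le_antisymm (h.trans hq1) hq2)))

theorem exists_strictMono_tendsto_of_frequently {α : Type*} [PseudoMetricSpace α]
    {x : ℕ → α} {q : α} {P : ℕ → Prop}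
    (h : ∀ ε > 0, ∃ᶠ n in atTop, dist (x n) q < ε ∧ P n) :
    ∃ φ : ℕ → ℕ, StrictMono φ ∧ Tendsto (fun k => x (φ k)) atTop (𝓝 q) ∧ ∀ k, P (φ k) := by
  obtain ⟨φ, hφ, hφx⟩ := extraction_forall_of_frequently fun k : ℕ =>
    h (1 / ((k : ℝ) + 1)) Nat.one_div_pos_of_nat
  refine ⟨φ, hφ, tendsto_iff_dist_tendsto_zero.2 ?_, fun k => (hφx k).2⟩
  exact squeeze_zero (fun _ => dist_nonneg) (fun k => (hφx k).1.le)
    tendsto_one_div_add_atTop_nhds_zero_nat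

/-- **Lemma (sequences with vanishing increments).**
If `a_{n+1} - a_n → 0` but `(a_n)` has no limit, then for every positive integer `r`
and every real `q ∈ [liminf a_n, limsup a_n]` there is a strictly increasing sequence
`(n_k)` with `a_{n_k} → q` and `a_{n_k} < a_{n_k + r}` for every `k`. -/
theorem subsequence_with_increase (a : ℕ → ℝ)
    (hdiff : Tendsto (fun n => a (n + 1) - a n) atTop (𝓝 (0 : ℝ)))
    (hnolim : ¬ ∃ L : ℝ, Tendsto a atTop (𝓝 L))
    (r : ℕ) (hr : 0 < r) (q : ℝ)
    (hq1 : liminf (fun n => ((a n : ℝ) : EReal)) atTop ≤ (q : EReal))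
    (hq2 : (q : EReal) ≤ limsup (fun n => ((a n : ℝ) : EReal)) atTop) :
    ∃ nk : ℕ → ℕ, StrictMono nk ∧ Tendsto (fun k => a (nk k)) atTop (𝓝 q) ∧
      ∀ k, a (nk k) < a (nk k + r) := by
  have hLU := liminf_lt_limsup_of_not_tendsto hq1 hq2 fun h => hnolim ⟨q, h⟩
  refine exists_strictMono_tendsto_of_frequently (P := fun n => a n < a (n + r)) fun ε hε => ?_
  obtain ⟨u, ⟨hLu, huU⟩, huq⟩ :=
    EReal.exists_coe_mem_Ioo_dist_lt hLU ⟨hq1, hq2⟩ (half_pos hε)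
  obtain ⟨v, huv, hvU⟩ := EReal.lt_iff_exists_real_btwn.1 huU
  have hu : ∃ᶠ n in atTop, a n < u :=
    (frequently_lt_of_liminf_lt (by isBoundedDefault) hLu).mono fun _ => EReal.coe_lt_coe_iff.1
  have hv : ∃ᶠ n in atTop, v < a n :=
    (frequently_lt_of_lt_limsup (by isBoundedDefault) hvU).mono fun _ => EReal.coe_lt_coe_iff.1
  refine (frequently_mem_Ioo_and_lt_add hdiff hr (EReal.coe_lt_coe_iff.1 huv) hu hv
    (half_pos hε)).mono fun n ⟨hn, hincr⟩ => ⟨?_, hincr⟩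
  calc dist (a n) q ≤ dist (a n) u + dist u q := dist_triangle _ _ _
    _ < ε / 2 + ε / 2 := by
        gcongr
        rw [Real.dist_eq, abs_lt]
        constructor <;> linarith [hn.1, hn.2]
    _ = ε := add_halves ε
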